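/- Stationarity of approximation numbers under convex hull of the domain ball: if 0 < p ≤ 1 ≤ q ≤ ∞ and 1 ≤ n ≤ N², then a_n(S_p^N ↪ S_q^N) = a_n(S_1^N ↪ S_q^N). -/

import Mathlib

open scoped ENNReal

/-- The (unordered) singular values of a real `N × N` matrix `A`:
the square roots of the eigenvalues of `Aᵀ * A`. -/
noncomputable def singularValues (N : ℕ) (A : Matrix (Fin N) (Fin N) ℝ) : Fin N → ℝ :=
  fun i => Real.sqrt ((Matrix.isHermitian_conjTranspose_mul_self A).eigenvalues i)

/-- The Schatten `p`-(quasi-)norm of a real `N × N` matrix, `0 < p ≤ ∞`. -/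
noncomputable def schattenNorm (N : ℕ) (p : ℝ≥0∞) (A : Matrix (Fin N) (Fin N) ℝ) : ℝ :=
  if p = ⊤ then ⨆ i, singularValues N A i
  else (∑ i, singularValues N A i ^ p.toReal) ^ (1 / p.toReal)

/-- The `n`-th approximation number of the natural identity `S_p^N → S_q^N`. -/
noncomputable def approxNumber (N : ℕ) (p q : ℝ≥0∞) (n : ℕ) : ℝ :=
  sInf {r : ℝ | ∃ T : Matrix (Fin N) (Fin N) ℝ →ₗ[ℝ] Matrix (Fin N) (Fin N) ℝ,
    Module.finrank ℝ (LinearMap.range T) < n ∧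
    r = sSup {s : ℝ | ∃ A, schattenNorm N p A ≤ 1 ∧ s = schattenNorm N q (A - T A)}}

/-- The `n`-th Gelfand number of the natural identity `S_p^N → S_q^N`. -/
noncomputable def gelfandNumber (N : ℕ) (p q : ℝ≥0∞) (n : ℕ) : ℝ :=
  sInf {r : ℝ | ∃ F : Submodule ℝ (Matrix (Fin N) (Fin N) ℝ),
    N ^ 2 - Module.finrank ℝ F < n ∧
    r = sSup {s : ℝ | ∃ A ∈ F, schattenNorm N p A ≤ 1 ∧ s = schattenNorm N q A}}

/-- The `n`-th Kolmogorov number of the natural identity `S_p^N → S_q^N`. -/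
noncomputable def kolmogorovNumber (N : ℕ) (p q : ℝ≥0∞) (n : ℕ) : ℝ :=
  sInf {r : ℝ | ∃ E : Submodule ℝ (Matrix (Fin N) (Fin N) ℝ),
    Module.finrank ℝ E < n ∧
    r = sSup {s : ℝ | ∃ A, schattenNorm N p A ≤ 1 ∧
      s = sInf {t : ℝ | ∃ B ∈ E, t = schattenNorm N q (A - B)}}}

/-!
The unit ball of `S_1^N` is the convex hull of the rank-one matrices `u vᵀ` with unit vectors
`u, v` (singular value decomposition). These have Schatten `p`-norm `1` for every `p`, while for
`p ≤ 1` the unit ball of `S_p^N` lies inside that of `S_1^N`. As `A ↦ ‖A - T A‖_q` is convex for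
`q ≥ 1`, its values on the two balls have the same upper bounds, so the suprema agree (also when
they are infinite and both are the junk value `0`).

Convexity of the Schatten `q`-norm: it is the largest `ℓ_q` norm of a diagonal `(⟪f k, A e k⟫)_k`
over pairs of orthonormal bases `e, f`. Writing `A` through its singular value decomposition,
`|⟪f k, A e k⟫| ≤ ∑ j, σ_j (⟪f k, u_j⟫² + ⟪e k, v_j⟫²) / 2`, a doubly stochastic average of the
singular values, and such averages do not increase `ℓ_q` norms (Jensen). The diagonal is linear
in `A`, and for the bases of the singular value decomposition it is the vector of singular values.
-/

open Matrix WithLp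
open scoped RealInnerProductSpace

theorem norm_toLp_le_of_abs_le_mulVec {ι : Type*} [Fintype ι] [DecidableEq ι] {q : ℝ≥0∞}
    (hq : 1 ≤ q) {c : Matrix ι ι ℝ} (hc : c ∈ doublyStochastic ℝ ι) {x y : ι → ℝ} (hx : 0 ≤ x)
    (hy : ∀ k, |y k| ≤ (c *ᵥ x) k) : ‖toLp q y‖ ≤ ‖toLp q x‖ := by
  obtain ⟨hc0, hrow, hcol⟩ := mem_doublyStochastic_iff_sum.mp hc
  rcases eq_or_ne q ⊤ with rfl | hqt
  · rw [PiLp.norm_eq_ciSup, PiLp.norm_eq_ciSup]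
    rcases isEmpty_or_nonempty ι with hι | hι
    · simp
    refine ciSup_le fun k => ?_
    have hle : ∀ j, x j ≤ ⨆ i, ‖x i‖ := fun j =>
      (le_abs_self _).trans (le_ciSup (f := fun i => ‖x i‖) (Finite.bddAbove_range _) j)
    calc ‖y k‖ ≤ ∑ j, c k j * x j := hy k
      _ ≤ ∑ j, c k j * ⨆ i, ‖x i‖ := by gcongr with j; exacts [hc0 k j, hle j]
      _ = ⨆ i, ‖x i‖ := by rw [← Finset.sum_mul, hrow, one_mul]
  · have hr : 1 ≤ q.toReal := ENNReal.toReal_mono hqt hq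
    have hr0 : 0 < q.toReal := one_pos.trans_le hr
    rw [PiLp.norm_eq_sum hr0, PiLp.norm_eq_sum hr0]
    refine Real.rpow_le_rpow (by positivity) ?_ (by positivity)
    calc ∑ k, ‖y k‖ ^ q.toReal ≤ ∑ k, (∑ j, c k j * x j) ^ q.toReal := by
          gcongr with k; exact hy k
      _ ≤ ∑ k, ∑ j, c k j * x j ^ q.toReal := by
          gcongr with k
          exact Real.rpow_arith_mean_le_arith_mean_rpow _ _ _ (fun j _ => hc0 k j) (hrow k)
            (fun j _ => hx j) hr
      _ = ∑ j, ‖x j‖ ^ q.toReal := by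
          rw [Finset.sum_comm]
          refine Finset.sum_congr rfl fun j _ => ?_
          rw [← Finset.sum_mul, hcol, one_mul, Real.norm_of_nonneg (hx j)]

theorem Real.sSup_eq_of_upperBounds_eq {s t : Set ℝ} (hs : s.Nonempty) (ht : t.Nonempty)
    (h : upperBounds s = upperBounds t) : sSup s = sSup t := by
  by_cases hb : BddAbove s
  · exact (((isLUB_congr h).mp (isLUB_csSup hs hb)).csSup_eq ht).symm
  · have hb' : ¬BddAbove t := by rwa [BddAbove, ← h]
    rw [Real.sSup_of_not_bddAbove hb, Real.sSup_of_not_bddAbove hb']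

theorem real_inner_eq_dotProduct {ι : Type*} [Fintype ι] (x y : EuclideanSpace ℝ ι) :
    ⟪x, y⟫ = ⇑x ⬝ᵥ ⇑y := by
  rw [EuclideanSpace.inner_eq_star_dotProduct, star_trivial, dotProduct_comm]

theorem eq_sum_vecMulVec_of_mulVec_eq {m ι : Type*} [Fintype ι] [DecidableEq ι]
    (A : Matrix m ι ℝ) (V : OrthonormalBasis ι ℝ (EuclideanSpace ℝ ι)) (w : ι → m → ℝ)
    (h : ∀ i, A *ᵥ ⇑(V i) = w i) : A = ∑ i, vecMulVec (w i) ⇑(V i) := by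
  refine ext_of_mulVec_single fun k => ?_
  have hexp := congrArg ofLp (V.sum_repr' (toLp 2 (Pi.single k 1)))
  simp only [ofLp_sum, ofLp_smul] at hexp
  conv_lhs => rw [← hexp]
  simp only [mulVec_sum, mulVec_smul, h, sum_mulVec, vecMulVec_mulVec, real_inner_eq_dotProduct,
    op_smul_eq_smul]

section Diagonal

variable {ι : Type*} [Fintype ι]

noncomputable def diagWith (e f : OrthonormalBasis ι ℝ (EuclideanSpace ℝ ι)) :
    Matrix ι ι ℝ →ₗ[ℝ] ι → ℝ where
  toFun A k := ⇑(f k) ⬝ᵥ (A *ᵥ ⇑(e k))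
  map_add' A B := by ext k; simp [add_mulVec, dotProduct_add]
  map_smul' c A := by ext k; simp [smul_mulVec, dotProduct_smul]

theorem diagWith_vecMulVec (e f : OrthonormalBasis ι ℝ (EuclideanSpace ℝ ι))
    (u v : EuclideanSpace ℝ ι) (k : ι) :
    diagWith e f (vecMulVec ⇑u ⇑v) k = ⟪f k, u⟫ * ⟪v, e k⟫ := by
  simp [diagWith, vecMulVec_mulVec, dotProduct_smul, real_inner_eq_dotProduct, mul_comm]

theorem diagWith_sum_smul_vecMulVec [DecidableEq ι]
    (U V : OrthonormalBasis ι ℝ (EuclideanSpace ℝ ι)) (s : ι → ℝ) :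
    diagWith V U (∑ i, s i • vecMulVec ⇑(U i) ⇑(V i)) = s := by
  ext k
  simp [diagWith_vecMulVec, orthonormal_iff_ite.mp U.orthonormal,
    orthonormal_iff_ite.mp V.orthonormal]

theorem of_sq_inner_mem_doublyStochastic [DecidableEq ι]
    (b b' : OrthonormalBasis ι ℝ (EuclideanSpace ℝ ι)) :
    of (fun k j => ⟪b k, b' j⟫ ^ 2) ∈ doublyStochastic ℝ ι := by
  refine mem_doublyStochastic_iff_sum.mpr ⟨fun _ _ => sq_nonneg _, fun k => ?_, fun j => ?_⟩
  · simp [b'.sum_sq_inner_left, b.orthonormal.1 k]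
  · simp [b.sum_sq_inner_right, b'.orthonormal.1 j]

theorem abs_diagWith_sum_smul_vecMulVec_le (e f U V : OrthonormalBasis ι ℝ (EuclideanSpace ℝ ι))
    {s : ι → ℝ} (hs : 0 ≤ s) (k : ι) :
    |diagWith e f (∑ i, s i • vecMulVec ⇑(U i) ⇑(V i)) k| ≤
      (((1 / 2 : ℝ) • of (fun k j => ⟪f k, U j⟫ ^ 2) +
        (1 / 2 : ℝ) • of (fun k j => ⟪e k, V j⟫ ^ 2)) *ᵥ s) k := by
  simp only [map_sum, map_smul, Finset.sum_apply, Pi.smul_apply, diagWith_vecMulVec, smul_eq_mul,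
    mulVec, dotProduct, Matrix.add_apply, Matrix.smul_apply, of_apply]
  refine (Finset.abs_sum_le_sum_abs _ _).trans (Finset.sum_le_sum fun j _ => ?_)
  rw [abs_mul, abs_of_nonneg (hs j), real_inner_comm (e k)]
  have hamgm : |⟪f k, U j⟫ * ⟪e k, V j⟫| ≤ (⟪f k, U j⟫ ^ 2 + ⟪e k, V j⟫ ^ 2) / 2 := by
    rw [abs_mul]
    nlinarith [sq_nonneg (|⟪f k, U j⟫| - |⟪e k, V j⟫|), sq_abs ⟪f k, U j⟫, sq_abs ⟪e k, V j⟫]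
  linarith [mul_le_mul_of_nonneg_left hamgm (hs j)]

end Diagonal

section Schatten

variable {N : ℕ}

theorem singularValues_nonneg (A : Matrix (Fin N) (Fin N) ℝ) (i : Fin N) :
    0 ≤ singularValues N A i :=
  Real.sqrt_nonneg _

theorem sq_singularValues (A : Matrix (Fin N) (Fin N) ℝ) (i : Fin N) :
    singularValues N A i ^ 2 = (isHermitian_conjTranspose_mul_self A).eigenvalues i :=
  Real.sq_sqrt (eigenvalues_conjTranspose_mul_self_nonneg A i)

theorem singularValues_zero : singularValues N 0 = 0 := by
  have h := isHermitian_conjTranspose_mul_self (0 : Matrix (Fin N) (Fin N) ℝ)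
  funext i
  rw [singularValues, h.eigenvalues_eq_zero_iff.mpr (by simp), Pi.zero_apply, Real.sqrt_zero]

theorem schattenNorm_eq_norm_toLp {p : ℝ≥0∞} (hp : p ≠ 0) (A : Matrix (Fin N) (Fin N) ℝ) :
    schattenNorm N p A = ‖toLp p (singularValues N A)‖ := by
  have hnorm : ∀ i, ‖singularValues N A i‖ = singularValues N A i := fun i =>
    Real.norm_of_nonneg (singularValues_nonneg A i)
  rcases eq_or_ne p ⊤ with rfl | hpt
  · simp [schattenNorm, PiLp.norm_eq_ciSup, hnorm]
  · simp [schattenNorm, hpt, PiLp.norm_eq_sum (ENNReal.toReal_pos hp hpt), hnorm]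

theorem schattenNorm_nonneg (p : ℝ≥0∞) (A : Matrix (Fin N) (Fin N) ℝ) :
    0 ≤ schattenNorm N p A := by
  unfold schattenNorm
  split_ifs
  · exact Real.iSup_nonneg (singularValues_nonneg A)
  · exact Real.rpow_nonneg
      (Finset.sum_nonneg fun i _ => Real.rpow_nonneg (singularValues_nonneg A i) _) _

theorem schattenNorm_zero {p : ℝ≥0∞} (hp : p ≠ 0) : schattenNorm N p 0 = 0 := by
  rcases eq_or_ne p ⊤ with rfl | hpt
  · simp [schattenNorm, singularValues_zero]
  · simp [schattenNorm, hpt, singularValues_zero, (ENNReal.toReal_pos hp hpt).ne']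

theorem exists_orthonormalBasis_mulVec_eq_smul (A : Matrix (Fin N) (Fin N) ℝ) :
    ∃ U V : OrthonormalBasis (Fin N) ℝ (EuclideanSpace ℝ (Fin N)),
      ∀ i, A *ᵥ ⇑(V i) = singularValues N A i • ⇑(U i) := by
  set hA := isHermitian_conjTranspose_mul_self A
  set V := hA.eigenvectorBasis
  set σ := singularValues N A
  have hgram : ∀ i j, (A *ᵥ ⇑(V i)) ⬝ᵥ (A *ᵥ ⇑(V j)) = if i = j then σ i ^ 2 else 0 := by
    intro i j
    have hgram_eq : (A *ᵥ ⇑(V i)) ⬝ᵥ (A *ᵥ ⇑(V j)) = ⇑(V i) ⬝ᵥ ((Aᴴ * A) *ᵥ ⇑(V j)) := by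
      rw [← mulVec_mulVec, dotProduct_mulVec (⇑(V i)), conjTranspose_eq_transpose_of_trivial,
        vecMul_transpose]
    rw [hgram_eq, hA.mulVec_eigenvectorBasis, dotProduct_smul, ← real_inner_eq_dotProduct,
      orthonormal_iff_ite.mp V.orthonormal]
    split_ifs with hij
    · subst hij; simp [σ, sq_singularValues]
    · simp
  set s : Set (Fin N) := {i | σ i ≠ 0}
  set w : Fin N → EuclideanSpace ℝ (Fin N) := fun i => toLp 2 ((σ i)⁻¹ • A *ᵥ ⇑(V i))
  have horth : Orthonormal ℝ (s.domRestrict w) := by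
    rw [orthonormal_iff_ite]
    rintro ⟨i, hi⟩ ⟨j, hj⟩
    simp only [Set.domRestrict_apply, Subtype.mk.injEq, w, real_inner_eq_dotProduct,
      smul_dotProduct, dotProduct_smul, hgram, smul_eq_mul]
    split_ifs with hij
    · subst hij; field_simp [show σ i ≠ 0 from hi]
    · simp
  obtain ⟨U, hU⟩ := horth.exists_orthonormalBasis_extension_of_card_eq (by simp)
  refine ⟨U, V, fun i => ?_⟩
  by_cases hi : σ i = 0
  · have hAVi : A *ᵥ ⇑(V i) = 0 := dotProduct_self_eq_zero.mp (by simp [hgram, hi])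
    rw [hAVi, hi, zero_smul]
  · rw [hU i hi, ofLp_toLp, smul_smul, mul_inv_cancel₀ hi, one_smul]

theorem exists_svd (A : Matrix (Fin N) (Fin N) ℝ) :
    ∃ U V : OrthonormalBasis (Fin N) ℝ (EuclideanSpace ℝ (Fin N)),
      A = ∑ i, singularValues N A i • vecMulVec ⇑(U i) ⇑(V i) := by
  obtain ⟨U, V, h⟩ := exists_orthonormalBasis_mulVec_eq_smul A
  refine ⟨U, V, ?_⟩
  simp_rw [← smul_vecMulVec]
  exact eq_sum_vecMulVec_of_mulVec_eq A V _ h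

theorem norm_diagWith_le_schattenNorm {q : ℝ≥0∞} (hq : 1 ≤ q) (A : Matrix (Fin N) (Fin N) ℝ)
    (e f : OrthonormalBasis (Fin N) ℝ (EuclideanSpace ℝ (Fin N))) :
    ‖toLp q (diagWith e f A)‖ ≤ schattenNorm N q A := by
  obtain ⟨U, V, hA⟩ := exists_svd A
  rw [schattenNorm_eq_norm_toLp (one_pos.trans_le hq).ne']
  have hc := convex_doublyStochastic (of_sq_inner_mem_doublyStochastic f U)
    (of_sq_inner_mem_doublyStochastic e V) (by norm_num : (0 : ℝ) ≤ 1 / 2)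
    (by norm_num : (0 : ℝ) ≤ 1 / 2) (by norm_num)
  refine norm_toLp_le_of_abs_le_mulVec hq hc (singularValues_nonneg A) fun k => ?_
  conv_lhs => rw [hA]
  exact abs_diagWith_sum_smul_vecMulVec_le e f U V (singularValues_nonneg A) k

theorem schattenNorm_sum_smul_le {ι : Type*} [Fintype ι] {q : ℝ≥0∞} (hq : 1 ≤ q) {c : ι → ℝ}
    (hc : 0 ≤ c) (M : ι → Matrix (Fin N) (Fin N) ℝ) :
    schattenNorm N q (∑ i, c i • M i) ≤ ∑ i, c i * schattenNorm N q (M i) := by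
  have : Fact (1 ≤ q) := ⟨hq⟩
  obtain ⟨U, V, hsvd⟩ := exists_svd (∑ i, c i • M i)
  have hdiag := diagWith_sum_smul_vecMulVec U V (singularValues N (∑ i, c i • M i))
  rw [← hsvd] at hdiag
  calc schattenNorm N q (∑ i, c i • M i) = ‖toLp q (diagWith V U (∑ i, c i • M i))‖ := by
        rw [hdiag, schattenNorm_eq_norm_toLp (one_pos.trans_le hq).ne']
    _ = ‖∑ i, c i • toLp q (diagWith V U (M i))‖ := by simp
    _ ≤ ∑ i, ‖c i • toLp q (diagWith V U (M i))‖ := norm_sum_le _ _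
    _ ≤ ∑ i, c i * schattenNorm N q (M i) := by
        gcongr with i
        rw [norm_smul, Real.norm_of_nonneg (hc i)]
        exact mul_le_mul_of_nonneg_left (norm_diagWith_le_schattenNorm hq _ V U) (hc i)

theorem schattenNorm_vecMulVec {p : ℝ≥0∞} (hp0 : p ≠ 0) (hp : p ≠ ⊤)
    {u v : EuclideanSpace ℝ (Fin N)} (hu : ‖u‖ = 1) (hv : ‖v‖ = 1) :
    schattenNorm N p (vecMulVec ⇑u ⇑v) = 1 := by
  have hunit : ∀ x : EuclideanSpace ℝ (Fin N), ‖x‖ = 1 → ⇑x ⬝ᵥ ⇑x = 1 := fun x hx => by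
    rw [← real_inner_eq_dotProduct, real_inner_self_eq_norm_sq, hx, one_pow]
  set R := vecMulVec ⇑u ⇑v
  have hRR : Rᴴ * R = vecMulVec ⇑v ⇑v := by
    rw [conjTranspose_eq_transpose_of_trivial, transpose_vecMulVec, vecMulVec_mul_vecMulVec,
      hunit u hu, one_smul]
  have hidem : IsIdempotentElem (Rᴴ * R) := by
    rw [IsIdempotentElem, hRR, vecMulVec_mul_vecMulVec, hunit v hv, one_smul]
  have hH := isHermitian_conjTranspose_mul_self R
  have hσ : ∀ i, singularValues N R i ^ p.toReal = hH.eigenvalues i := fun i => by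
    rcases hidem.spectrum_subset ℝ (hH.eigenvalues_mem_spectrum_real i) with h | h
    · rw [singularValues, h, Real.sqrt_zero, Real.zero_rpow (ENNReal.toReal_pos hp0 hp).ne']
    · rw [singularValues, Set.mem_singleton_iff.mp h, Real.sqrt_one, Real.one_rpow]
  have htrace : ∑ i, hH.eigenvalues i = 1 :=
    calc ∑ i, hH.eigenvalues i = (Rᴴ * R).trace := by
          simpa using hH.trace_eq_sum_eigenvalues.symm
      _ = 1 := by rw [hRR, trace_vecMulVec, hunit v hv]
  rw [schattenNorm, if_neg hp, Finset.sum_congr rfl fun i _ => hσ i, htrace, Real.one_rpow]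

theorem schattenNorm_one_le_one_of_schattenNorm_le_one {p : ℝ≥0∞} (hp0 : 0 < p) (hp1 : p ≤ 1)
    {A : Matrix (Fin N) (Fin N) ℝ} (hA : schattenNorm N p A ≤ 1) : schattenNorm N 1 A ≤ 1 := by
  have hpt : p ≠ ⊤ := ne_top_of_le_ne_top ENNReal.one_ne_top hp1
  have hr0 : 0 < p.toReal := ENNReal.toReal_pos hp0.ne' hpt
  have hr1 : p.toReal ≤ 1 := by simpa using ENNReal.toReal_mono ENNReal.one_ne_top hp1
  set σ := singularValues N A
  have hσ0 := singularValues_nonneg A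
  have hsum : ∑ i, σ i ^ p.toReal ≤ 1 := by
    rwa [schattenNorm, if_neg hpt, one_div, Real.rpow_inv_le_iff_of_pos
      (Finset.sum_nonneg fun i _ => Real.rpow_nonneg (hσ0 i) _) zero_le_one hr0,
      Real.one_rpow] at hA
  have hσ1 : ∀ i, σ i ≤ 1 := fun i => by
    rw [← Real.rpow_le_rpow_iff (hσ0 i) zero_le_one hr0, Real.one_rpow]
    exact (Finset.single_le_sum (fun j _ => Real.rpow_nonneg (hσ0 j) _)
      (Finset.mem_univ i)).trans hsum
  calc schattenNorm N 1 A = ∑ i, σ i := by simp [schattenNorm, σ]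
    _ ≤ ∑ i, σ i ^ p.toReal :=
        Finset.sum_le_sum fun i _ => Real.self_le_rpow_of_le_one (hσ0 i) (hσ1 i) hr1
    _ ≤ 1 := hsum

theorem schattenNorm_apply_le_of_forall_vecMulVec {q : ℝ≥0∞} (hq : 1 ≤ q)
    (L : Matrix (Fin N) (Fin N) ℝ →ₗ[ℝ] Matrix (Fin N) (Fin N) ℝ) {C : ℝ}
    (hL : ∀ u v : EuclideanSpace ℝ (Fin N), ‖u‖ = 1 → ‖v‖ = 1 →
      schattenNorm N q (L (vecMulVec ⇑u ⇑v)) ≤ C)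
    (A : Matrix (Fin N) (Fin N) ℝ) : schattenNorm N q (L A) ≤ schattenNorm N 1 A * C := by
  obtain ⟨U, V, hA⟩ := exists_svd A
  have hσ := singularValues_nonneg A
  calc schattenNorm N q (L A)
      = schattenNorm N q (∑ i, singularValues N A i • L (vecMulVec ⇑(U i) ⇑(V i))) := by
        conv_lhs => rw [hA]
        simp
    _ ≤ ∑ i, singularValues N A i * schattenNorm N q (L (vecMulVec ⇑(U i) ⇑(V i))) :=
        schattenNorm_sum_smul_le hq hσ _
    _ ≤ ∑ i, singularValues N A i * C := by
        gcongr with i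
        · exact hσ i
        · exact hL _ _ (U.orthonormal.1 i) (V.orthonormal.1 i)
    _ = schattenNorm N 1 A * C := by simp [schattenNorm, Finset.sum_mul]

theorem upperBounds_schattenNorm_image_eq {p q : ℝ≥0∞} (hp0 : 0 < p) (hp1 : p ≤ 1) (hq : 1 ≤ q)
    (L : Matrix (Fin N) (Fin N) ℝ →ₗ[ℝ] Matrix (Fin N) (Fin N) ℝ) :
    upperBounds {s | ∃ A, schattenNorm N p A ≤ 1 ∧ s = schattenNorm N q (L A)} =
      upperBounds {s | ∃ A, schattenNorm N 1 A ≤ 1 ∧ s = schattenNorm N q (L A)} := by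
  refine Set.Subset.antisymm (fun C hC => ?_) (upperBounds_mono_set ?_)
  · rintro _ ⟨A, hA, rfl⟩
    have hpt : p ≠ ⊤ := ne_top_of_le_ne_top ENNReal.one_ne_top hp1
    have hL : ∀ u v : EuclideanSpace ℝ (Fin N), ‖u‖ = 1 → ‖v‖ = 1 →
        schattenNorm N q (L (vecMulVec ⇑u ⇑v)) ≤ C := fun u v hu hv =>
      hC ⟨_, (schattenNorm_vecMulVec hp0.ne' hpt hu hv).le, rfl⟩
    have hC0 : 0 ≤ C := (schattenNorm_nonneg q _).trans
      (hC ⟨0, (schattenNorm_zero hp0.ne').trans_le zero_le_one, rfl⟩)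
    calc schattenNorm N q (L A) ≤ schattenNorm N 1 A * C :=
          schattenNorm_apply_le_of_forall_vecMulVec hq L hL A
      _ ≤ C := mul_le_of_le_one_left hC0 hA
  · rintro _ ⟨A, hA, rfl⟩
    exact ⟨A, schattenNorm_one_le_one_of_schattenNorm_le_one hp0 hp1 hA, rfl⟩

theorem sSup_schattenNorm_image_eq {p q : ℝ≥0∞} (hp0 : 0 < p) (hp1 : p ≤ 1) (hq : 1 ≤ q)
    (L : Matrix (Fin N) (Fin N) ℝ →ₗ[ℝ] Matrix (Fin N) (Fin N) ℝ) :
    sSup {s | ∃ A, schattenNorm N p A ≤ 1 ∧ s = schattenNorm N q (L A)} =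
      sSup {s | ∃ A, schattenNorm N 1 A ≤ 1 ∧ s = schattenNorm N q (L A)} :=
  Real.sSup_eq_of_upperBounds_eq
    ⟨_, 0, (schattenNorm_zero hp0.ne').trans_le zero_le_one, rfl⟩
    ⟨_, 0, (schattenNorm_zero one_ne_zero).trans_le zero_le_one, rfl⟩
    (upperBounds_schattenNorm_image_eq hp0 hp1 hq L)

end Schatten

theorem approxNumber_stationary_general (N : ℕ) (p q : ℝ≥0∞)
    (hp0 : 0 < p) (hp1 : p ≤ 1) (hq : 1 ≤ q)
    (n : ℕ) :
    approxNumber N p q n = approxNumber N 1 q n := by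
  have hsup : ∀ T : Matrix (Fin N) (Fin N) ℝ →ₗ[ℝ] Matrix (Fin N) (Fin N) ℝ,
      sSup {s | ∃ A, schattenNorm N p A ≤ 1 ∧ s = schattenNorm N q (A - T A)} =
        sSup {s | ∃ A, schattenNorm N 1 A ≤ 1 ∧ s = schattenNorm N q (A - T A)} := fun T => by
    have h := sSup_schattenNorm_image_eq hp0 hp1 hq (LinearMap.id - T)
    simp only [LinearMap.sub_apply, LinearMap.id_apply] at h
    exact h
  simp only [approxNumber, hsup]

/-- **Stationarity of approximation numbers:** if `0 < p ≤ 1 ≤ q ≤ ∞` and `1 ≤ n ≤ N²`,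
then `a_n(S_p^N ↪ S_q^N) = a_n(S_1^N ↪ S_q^N)`. -/
theorem approxNumber_stationary (N : ℕ) (p q : ℝ≥0∞)
    (hp0 : 0 < p) (hp1 : p ≤ 1) (hq : 1 ≤ q)
    (n : ℕ) (hn1 : 1 ≤ n) (hn2 : n ≤ N ^ 2) :
    approxNumber N p q n = approxNumber N 1 q n :=
  approxNumber_stationary_general N p q hp0 hp1 hq n
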